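/- Let N, n, m, q be natural numbers with n = m + q, q ≥ 1 and N > 2n − m. Let b ∈ ℝ^{q+1} be nonzero, c ∈ ℝ^{m+1}, a = c ⋆ b ∈ ℝ^{n+1}, and let ŷ ∈ ℝ^N satisfy T_{N−n}(a) ŷ = 0 and rank(T_{N−n}(c) H_q(ŷ)) = q. Then the left null space of the filtered Hankel matrix equals the row space of T_{N−2n+m}(b): for every λ ∈ ℝ^{N−n} with λᵀ T_{N−n}(c) H_q(ŷ) = 0 there exists g ∈ ℝ^{N−2n+m} such that λ = T_{N−2n+m}(b)ᵀ g. -/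

import Mathlib

open Matrix

/-- Banded Toeplitz matrix `T_k(a)` of a coefficient vector `a = (a_n, …, a_1, a_0)`:
entry `(i,j)` equals the coefficient `a_{n-(j-i)}` (vector component `j - i`, since
component `t` of the vector is the coefficient `a_{n-t}`) when `0 ≤ j - i ≤ n`, else `0`.
The number of columns is passed explicitly (intended: `N = k + n`). -/
def toep {R : Type*} [Semiring R] (k N n : ℕ) (a : Fin (n + 1) → R) :
    Matrix (Fin k) (Fin N) R :=
  Matrix.of fun i j =>
    if h : i.val ≤ j.val ∧ j.val - i.val ≤ n then a ⟨j.val - i.val, by omega⟩ else 0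

/-- Hankel matrix `H_q(y) ∈ R^{(N-q) × (q+1)}` with entries `(H_q(y))_{i,j} = y_{i+j}` (0-based). -/
def hank {R : Type*} [Semiring R] (N q : ℕ) (y : Fin N → R) :
    Matrix (Fin (N - q)) (Fin (q + 1)) R :=
  Matrix.of fun i j => y ⟨i.val + j.val, by have hi := i.isLt; have hj := j.isLt; omega⟩

/-- Convolution of coefficient vectors: `(c ⋆ b)_k = Σ_{i+j=k} c_i b_j`. -/
def convVec {R : Type*} [Semiring R] (m q : ℕ) (c : Fin (m + 1) → R) (b : Fin (q + 1) → R) :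
    Fin (m + q + 1) → R :=
  fun k => ∑ i : Fin (m + 1), ∑ j : Fin (q + 1), if i.val + j.val = k.val then c i * b j else 0

/-!
Because `a = c ⋆ b`, the banded Toeplitz matrices factor as `T(b) T(c) = T(a)`, and every
entry of `T(a) H_q(ŷ)` is an entry of `T_{N-n}(a) ŷ = 0`. Hence `T(b)` annihilates the filtered
Hankel matrix `M = T(c) H_q(ŷ)` from the left, i.e. the row space of `T(b)` lies in the left null
space of `M`. Since `b ≠ 0` the rows of `T(b)` are independent, so that row space has dimension
`N - 2n + m = (N - n) - rank M`, which is the dimension of the left null space.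
-/

namespace Matrix

variable {K : Type*} [Field K] {κ ι ν : Type*} [Fintype κ] [Fintype ι]

theorem finrank_range_vecMulLinear (A : Matrix κ ι K) :
    Module.finrank K (LinearMap.range A.vecMulLinear) = A.rank := by
  rw [← mulVecLin_transpose, ← rank_transpose]
  rfl

theorem ker_vecMulLinear_eq_range_vecMulLinear [Fintype ν] {T : Matrix κ ι K}
    {M : Matrix ι ν K} (hTM : T * M = 0) (hT : T.rank = Fintype.card κ)
    (hM : Fintype.card κ + M.rank = Fintype.card ι) :
    LinearMap.ker M.vecMulLinear = LinearMap.range T.vecMulLinear := by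
  have hle : LinearMap.range T.vecMulLinear ≤ LinearMap.ker M.vecMulLinear := by
    rintro _ ⟨g, rfl⟩
    simp [vecMul_vecMul, hTM]
  have hdim := LinearMap.finrank_range_add_finrank_ker M.vecMulLinear
  rw [finrank_range_vecMulLinear, Module.finrank_fintype_fun_eq_card] at hdim
  refine (Submodule.eq_of_le_of_finrank_le hle ?_).symm
  rw [finrank_range_vecMulLinear, hT]
  omega

end Matrix

theorem exists_ne_zero_forall_lt_eq_zero {ι R : Type*} [LinearOrder ι] [WellFoundedLT ι]
    [Zero R] {v : ι → R} (hv : v ≠ 0) : ∃ i, v i ≠ 0 ∧ ∀ j < i, v j = 0 := by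
  obtain ⟨i, hi, hmin⟩ := wellFounded_lt.has_min {i | v i ≠ 0} (Function.ne_iff.mp hv)
  exact ⟨i, hi, fun j hj => not_not.mp fun h => hmin j h hj⟩

section Toeplitz

variable {R : Type*}

theorem toep_apply_eq_sum [Semiring R] {k N n : ℕ} (a : Fin (n + 1) → R) (i : Fin k)
    (j : Fin N) :
    toep k N n a i j = ∑ u : Fin (n + 1), if (j : ℕ) = i + u then a u else 0 := by
  rw [toep, of_apply]
  split_ifs with h
  · have hu : ∀ u : Fin (n + 1), (j : ℕ) = i + u ↔ u = ⟨(j : ℕ) - i, by omega⟩ := fun u => by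
      rw [Fin.ext_iff]
      exact show (j : ℕ) = i + u ↔ (u : ℕ) = (j : ℕ) - i by omega
    simp only [hu, Finset.sum_ite_eq', Finset.mem_univ, if_true]
  · exact (Finset.sum_eq_zero fun u _ => if_neg fun hu => h ⟨by omega, by omega⟩).symm

theorem toep_mulVec_apply [Semiring R] {k N n : ℕ} (hN : k + n ≤ N) (a : Fin (n + 1) → R)
    (v : Fin N → R) (i : Fin k) :
    (toep k N n a *ᵥ v) i = ∑ u : Fin (n + 1), a u * v ⟨i + u, by omega⟩ := by
  simp only [mulVec, dotProduct, toep_apply_eq_sum, Finset.sum_mul, ite_mul, zero_mul]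
  rw [Finset.sum_comm]
  refine Finset.sum_congr rfl fun u _ => ?_
  have hs : ∀ s : Fin N, (s : ℕ) = i + u ↔ s = ⟨i + u, by omega⟩ := fun s =>
    by rw [Fin.ext_iff]
  simp only [hs, Finset.sum_ite_eq', Finset.mem_univ, if_true]

theorem toep_apply_add [Semiring R] {k N n : ℕ} (a : Fin (n + 1) → R) (i : Fin k)
    (t : Fin (n + 1)) (h : (i : ℕ) + t < N) : toep k N n a i ⟨i + t, h⟩ = a t := by
  simp [toep_apply_eq_sum, Fin.val_inj]

theorem sum_convVec_mul [Semiring R] {m q : ℕ} (c : Fin (m + 1) → R) (b : Fin (q + 1) → R)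
    (f : Fin (m + q + 1) → R) :
    ∑ w, convVec m q c b w * f w = ∑ p, ∑ r, c p * b r * f ⟨p + r, by omega⟩ := by
  simp only [convVec, Finset.sum_mul, ite_mul, zero_mul]
  rw [Finset.sum_comm]
  refine Finset.sum_congr rfl fun p _ => ?_
  rw [Finset.sum_comm]
  refine Finset.sum_congr rfl fun r _ => ?_
  have hw : ∀ w : Fin (m + q + 1), (p : ℕ) + r = w ↔ ⟨p + r, by omega⟩ = w := fun w => by
    rw [Fin.ext_iff]
  simp only [hw, Finset.sum_ite_eq, Finset.mem_univ, if_true]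

theorem toep_mul_toep [CommSemiring R] {k l p m q : ℕ} (hl : k + q ≤ l)
    (b : Fin (q + 1) → R) (c : Fin (m + 1) → R) :
    toep k l q b * toep l p m c = toep k p (m + q) (convVec m q c b) := by
  ext i j
  have hconv : toep k p (m + q) (convVec m q c b) i j
      = ∑ w, convVec m q c b w * if (j : ℕ) = i + w then 1 else 0 := by
    simp only [toep_apply_eq_sum, mul_ite, mul_one, mul_zero]
  rw [hconv, sum_convVec_mul, Finset.sum_comm]
  change (toep k l q b *ᵥ fun s => toep l p m c s j) i = _
  rw [toep_mulVec_apply hl]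
  refine Finset.sum_congr rfl fun r _ => ?_
  rw [toep_apply_eq_sum, Finset.mul_sum]
  refine Finset.sum_congr rfl fun u _ => ?_
  simp only [mul_ite, mul_one, mul_zero]
  exact if_congr (by omega) (mul_comm _ _) rfl

theorem toep_mul_hank_eq_zero [Semiring R] {N k n q : ℕ} (hk : k + n + q ≤ N)
    (a : Fin (n + 1) → R) (y : Fin N → R) (hy : toep (N - n) N n a *ᵥ y = 0) :
    toep k (N - q) n a * hank N q y = 0 := by
  ext i j
  have hrow := congrFun hy ⟨i + j, by omega⟩
  change (toep k (N - q) n a *ᵥ fun s => hank N q y s j) i = 0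
  rw [toep_mulVec_apply (by omega), Pi.zero_apply] at hrow
  rw [toep_mulVec_apply (by omega), ← hrow]
  refine Finset.sum_congr rfl fun u _ => ?_
  simp only [hank, of_apply]
  congr 2
  simp only [Fin.mk.injEq]
  omega

theorem vecMul_toep_ne_zero [Semiring R] [NoZeroDivisors R] {k N q : ℕ} (hN : k + q ≤ N)
    {b : Fin (q + 1) → R} (hb : b ≠ 0) {g : Fin k → R} (hg : g ≠ 0) :
    g ᵥ* toep k N q b ≠ 0 := by
  obtain ⟨i₀, hi₀, hi_min⟩ := exists_ne_zero_forall_lt_eq_zero hg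
  obtain ⟨t₀, ht₀, ht_min⟩ := exists_ne_zero_forall_lt_eq_zero hb
  -- column `i₀ + t₀` only sees the product of the leading nonzero entries of `g` and `b`
  have hcol : (g ᵥ* toep k N q b) ⟨i₀ + t₀, by omega⟩ = g i₀ * b t₀ := by
    rw [vecMul, dotProduct, Finset.sum_eq_single i₀]
    · rw [toep_apply_add]
    · intro i _ hi
      rcases lt_or_gt_of_ne hi with hlt | hgt
      · rw [hi_min i hlt, zero_mul]
      · rw [toep_apply_eq_sum, Finset.sum_eq_zero fun u _ => ite_eq_right_iff.mpr fun h =>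
          ht_min u (Fin.lt_def.mpr (by rw [Fin.lt_def] at hgt; dsimp only at h; omega)), mul_zero]
    · simp
  exact fun h => mul_ne_zero hi₀ ht₀ (hcol ▸ congrFun h _)

theorem rank_toep [Field R] {k N q : ℕ} (hN : k + q ≤ N) {b : Fin (q + 1) → R}
    (hb : b ≠ 0) : (toep k N q b).rank = k := by
  have hinj : Function.Injective (toep k N q b).vecMul := by
    rw [← coe_vecMulLinear, ← LinearMap.ker_eq_bot, LinearMap.ker_eq_bot']
    intro g hg
    by_contra h
    exact vecMul_toep_ne_zero hN hb h hg
  simpa using (vecMul_injective_iff.mp hinj).rank_matrix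

end Toeplitz

theorem stmt13_general (N m q : ℕ) (hN : m + 2 * q < N)
    (b : Fin (q + 1) → ℝ) (hb : b ≠ 0) (c : Fin (m + 1) → ℝ) (yhat : Fin N → ℝ)
    (hy : toep (N - (m + q)) N (m + q) (convVec m q c b) *ᵥ yhat = 0)
    (hrank : (toep (N - (m + q)) (N - q) m c * hank N q yhat).rank = q) :
    ∀ lam : Fin (N - (m + q)) → ℝ,
      lam ᵥ* (toep (N - (m + q)) (N - q) m c * hank N q yhat) = 0 →
      ∃ g : Fin (N - (m + 2 * q)) → ℝ,
        lam = (toep (N - (m + 2 * q)) (N - (m + q)) q b)ᵀ *ᵥ g := by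
  intro lam hlam
  have hTM : toep (N - (m + 2 * q)) (N - (m + q)) q b *
      (toep (N - (m + q)) (N - q) m c * hank N q yhat) = 0 := by
    rw [← Matrix.mul_assoc, toep_mul_toep (by omega), toep_mul_hank_eq_zero (by omega) _ _ hy]
  have hker := ker_vecMulLinear_eq_range_vecMulLinear hTM
    (by simpa using rank_toep (by omega) hb) (by simp only [hrank, Fintype.card_fin]; omega)
  obtain ⟨g, hg⟩ : lam ∈ LinearMap.range _ := hker ▸ LinearMap.mem_ker.mpr hlam
  exact ⟨g, by rw [mulVec_transpose, ← hg, vecMulLinear_apply]⟩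

/-- If `T_{N-n}(a) ŷ = 0` with `a = c ⋆ b`, `b ≠ 0`, and the filtered Hankel matrix
`T_{N-n}(c) H_q(ŷ)` has full rank `q`, then its left null space equals the row space of
`T_{N-2n+m}(b)`: every `λ` with `λᵀ T_{N-n}(c) H_q(ŷ) = 0` can be written as
`λ = T_{N-2n+m}(b)ᵀ g`. -/
theorem stmt13 (N m q : ℕ) (hq : 1 ≤ q) (hN : m + 2 * q < N)
    (b : Fin (q + 1) → ℝ) (hb : b ≠ 0) (c : Fin (m + 1) → ℝ) (yhat : Fin N → ℝ)
    (hy : toep (N - (m + q)) N (m + q) (convVec m q c b) *ᵥ yhat = 0)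
    (hrank : (toep (N - (m + q)) (N - q) m c * hank N q yhat).rank = q) :
    ∀ lam : Fin (N - (m + q)) → ℝ,
      lam ᵥ* (toep (N - (m + q)) (N - q) m c * hank N q yhat) = 0 →
      ∃ g : Fin (N - (m + 2 * q)) → ℝ,
        lam = (toep (N - (m + 2 * q)) (N - (m + q)) q b)ᵀ *ᵥ g :=
  stmt13_general N m q hN b hb c yhat hy hrank
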